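/- arXiv:1412.4799 — 3 statements merged into one kernel-verified Lean document; each statement's English description precedes it below -/
import Mathlib

section
/- Let $f:[0,T]\to\mathbb{R}$ be a $C^2$ function with $f(0)=0$, $0\le f'(0)\le 1$, and suppose $f''(t) \ge -\alpha\sqrt{1-f'(t)^2}$ whenever $|f'(t)|\le 1$, for some $\alpha>0$. Let $\mu:[0,T]\to\mathbb{R}^2$ be the clockwise unit-speed parametrization of a circle of radius $1/\alpha$ with $\mu(0)=(0,0)$ and second coordinate of $\mu'(0)$ equal to $f'(0)$. Then for all $t$ such that the second coordinate of $\mu$ is nondecreasing on $[0,t]$, one has $f(t) \ge x_2(\mu(t))$. -/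
open Set Real Filter Topology

/-! The slope `f'` stays above the slope `sin (φ₀ - α s)` of the comparison circle, where
`φ₀ = arcsin (f' 0)`: this is a barrier argument, since where the two slopes touch, the
curvature bound says exactly that `f'` cannot fall faster than the circle's slope. The barrier
needs a strict inequality, so it is run against circles of slightly larger curvature `α + ε`
started at the slightly smaller angle `φ₀ - ε`, and then `ε → 0`. Integrating the slope
comparison gives the height comparison. Monotonicity of the circle's height on `[0, t]` keeps
the angle `φ₀ - α s` in `[0, π/2]`, where the comparison is valid. -/

/-- The height `x₂ (μ s)` of the clockwise unit-speed circle of curvature `α` leaving the origin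
at angle `φ`. -/
noncomputable def circleHeight (φ α s : ℝ) : ℝ := (cos (φ - α * s) - cos φ) / α

theorem hasDerivAt_circleHeight {α : ℝ} (hα : α ≠ 0) (φ s : ℝ) :
    HasDerivAt (circleHeight φ α) (sin (φ - α * s)) s := by
  have h := (((hasDerivAt_id' s).const_mul α).const_sub φ).cos.sub_const (cos φ) |>.div_const α
  exact h.congr_deriv (by field_simp)

theorem circleHeight_zero (φ α : ℝ) : circleHeight φ α 0 = 0 := by
  simp [circleHeight]

theorem mul_le_of_monotoneOn_circleHeight {φ α t : ℝ} (hφ : 0 ≤ φ) (hα : 0 < α)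
    (hmono : MonotoneOn (circleHeight φ α) (Icc 0 t)) : α * t ≤ φ := by
  by_contra! hlt
  -- the height peaks at `s = φ / α`, where the angle vanishes, and drops right after it
  set θ := max (φ - α * t) (-(π / 2))
  have hθneg : θ < 0 := max_lt (by linarith) (by linarith [pi_pos])
  have hθt : φ - α * t ≤ θ := le_max_left _ _
  have hθpi : -(π / 2) ≤ θ := le_max_right _ _
  have hs₀ : 0 ≤ φ / α := div_nonneg hφ hα.le
  have hs₀₁ : φ / α ≤ (φ - θ) / α := div_le_div_of_nonneg_right (by linarith) hα.le
  have hs₁ : (φ - θ) / α ≤ t := by rw [div_le_iff₀ hα]; linarith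
  have h := hmono ⟨hs₀, hs₀₁.trans hs₁⟩ ⟨hs₀.trans hs₀₁, hs₁⟩ hs₀₁
  simp only [circleHeight, mul_div_cancel₀ _ hα.ne', sub_self, sub_sub_cancel] at h
  have hcos : cos (-θ) < cos 0 := cos_lt_cos_of_nonneg_of_le_pi le_rfl (by linarith) (by linarith)
  rw [cos_neg] at hcos
  linarith [(div_le_div_iff_of_pos_right hα).1 h]

theorem sin_sub_mul_le_of_hasDerivAt_of_lt {u u' : ℝ → ℝ} {T α c φ : ℝ} (hαc : α < c)
    (hθ : ∀ s ∈ Icc 0 T, φ - c * s ∈ Ioo (-(π / 2)) (π / 2))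
    (hu : ∀ s ∈ Icc 0 T, HasDerivAt u (u' s) s) (hu0 : sin φ ≤ u 0)
    (hbound : ∀ s ∈ Icc 0 T, |u s| ≤ 1 → -α * √(1 - u s ^ 2) ≤ u' s) :
    ∀ s ∈ Icc 0 T, sin (φ - c * s) ≤ u s := by
  have hsin (x : ℝ) : HasDerivAt (fun s => sin (φ - c * s)) (cos (φ - c * x) * -(c * 1)) x :=
    (((hasDerivAt_id' x).const_mul c).const_sub φ).sin
  refine image_le_of_deriv_right_lt_deriv_boundary'
    (fun x _ => (hsin x).continuousAt.continuousWithinAt) (fun x _ => (hsin x).hasDerivWithinAt)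
    (by simpa using hu0) (fun x hx => (hu x hx).continuousAt.continuousWithinAt)
    (fun x hx => (hu x (Ico_subset_Icc_self hx)).hasDerivWithinAt) ?_
  intro x hx htouch
  have hx' := Ico_subset_Icc_self hx
  have hcos : 0 < cos (φ - c * x) := cos_pos_of_mem_Ioo (hθ x hx')
  have hux := hbound x hx' (htouch ▸ abs_sin_le_one _)
  rw [← htouch, ← abs_cos_eq_sqrt_one_sub_sin_sq, abs_of_pos hcos] at hux
  linarith [mul_lt_mul_of_pos_right hαc hcos]

theorem sin_sub_mul_le_of_hasDerivAt {u u' : ℝ → ℝ} {T α φ : ℝ} (hα : 0 ≤ α) (hφ : φ ≤ π / 2)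
    (hφT : -(π / 2) < φ - α * T)
    (hu : ∀ s ∈ Icc 0 T, HasDerivAt u (u' s) s) (hu0 : sin φ ≤ u 0)
    (hbound : ∀ s ∈ Icc 0 T, |u s| ≤ 1 → -α * √(1 - u s ^ 2) ≤ u' s) :
    ∀ s ∈ Icc 0 T, sin (φ - α * s) ≤ u s := by
  intro s hs
  have hT : 0 ≤ T := hs.1.trans hs.2
  have hδ : 0 < (φ - α * T + π / 2) / (1 + T) := div_pos (by linarith) (by linarith)
  have hlim : Tendsto (fun ε => sin (φ - ε - (α + ε) * s)) (𝓝[>] 0) (𝓝 (sin (φ - α * s))) := by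
    have hcont : Continuous fun ε => sin (φ - ε - (α + ε) * s) := by fun_prop
    simpa using (hcont.tendsto 0).mono_left nhdsWithin_le_nhds
  refine le_of_tendsto hlim ?_
  filter_upwards [Ioo_mem_nhdsGT hδ] with ε ⟨hε, hεδ⟩
  have hεT : ε * (1 + T) < φ - α * T + π / 2 := (lt_div_iff₀ (by linarith)).1 hεδ
  refine sin_sub_mul_le_of_hasDerivAt_of_lt (by linarith) (fun x hx => ⟨?_, ?_⟩) hu ?_ hbound s hs
  · nlinarith [hx.2]
  · nlinarith [hx.1]
  · exact (sin_le_sin_of_le_of_le_pi_div_two (by nlinarith) hφ (by linarith)).trans hu0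

theorem circleHeight_le_of_sin_sub_mul_le {f f' : ℝ → ℝ} {T α φ : ℝ} (hα : α ≠ 0)
    (hf : ∀ s ∈ Icc 0 T, HasDerivAt f (f' s) s) (hf0 : f 0 = 0)
    (hslope : ∀ s ∈ Icc 0 T, sin (φ - α * s) ≤ f' s) :
    ∀ s ∈ Icc 0 T, circleHeight φ α s ≤ f s :=
  image_le_of_deriv_right_le_deriv_boundary
    (fun x _ => (hasDerivAt_circleHeight hα φ x).continuousAt.continuousWithinAt)
    (fun x _ => (hasDerivAt_circleHeight hα φ x).hasDerivWithinAt)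
    (by rw [circleHeight_zero, hf0]) (fun x hx => (hf x hx).continuousAt.continuousWithinAt)
    (fun x hx => (hf x (Ico_subset_Icc_self hx)).hasDerivWithinAt)
    (fun x hx => hslope x (Ico_subset_Icc_self hx))

theorem circle_comparison_general (T α : ℝ) (hα : 0 < α) (f f' f'' : ℝ → ℝ)
    (hf : ∀ t ∈ Icc (0:ℝ) T, HasDerivAt f (f' t) t)
    (hf' : ∀ t ∈ Icc (0:ℝ) T, HasDerivAt f' (f'' t) t)
    (hf0 : f 0 = 0) (hf'0 : 0 ≤ f' 0) (hf'1 : f' 0 ≤ 1)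
    (hcurv : ∀ t ∈ Icc (0:ℝ) T, |f' t| ≤ 1 →
      f'' t ≥ -α * Real.sqrt (1 - (f' t) ^ 2)) :
    ∀ t ∈ Icc (0:ℝ) T,
      (MonotoneOn
        (fun s => (Real.cos (Real.arcsin (f' 0) - α * s)
          - Real.cos (Real.arcsin (f' 0))) / α) (Icc (0:ℝ) t)) →
      f t ≥ (Real.cos (Real.arcsin (f' 0) - α * t)
          - Real.cos (Real.arcsin (f' 0))) / α := by
  intro t ht hmono
  set φ := arcsin (f' 0)
  have hsub : Icc 0 t ⊆ Icc 0 T := Icc_subset_Icc_right ht.2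
  have hαt : α * t ≤ φ := mul_le_of_monotoneOn_circleHeight (arcsin_nonneg.2 hf'0) hα hmono
  have hslope := sin_sub_mul_le_of_hasDerivAt hα.le (arcsin_le_pi_div_two _)
    (by linarith [pi_pos]) (fun s hs => hf' s (hsub hs))
    (sin_arcsin (by linarith) hf'1).le (fun s hs => hcurv s (hsub hs))
  exact circleHeight_le_of_sin_sub_mul_le hα.ne' (fun s hs => hf s (hsub hs)) hf0 hslope t
    (right_mem_Icc.2 ht.1)

/-- ODE comparison with a circle. Let `f` be `C²` on `[0,T]` with
`f 0 = 0`, `0 ≤ f' 0 ≤ 1`, and `f'' t ≥ -α √(1 - f'(t)²)` whenever `|f' t| ≤ 1`.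
Let `μ` be the clockwise unit-speed circle of radius `1/α` with `μ 0 = (0,0)` and
second coordinate of `μ' 0` equal to `f' 0` (explicitly
`μ t = ((sin φ₀ - sin (φ₀ - α t))/α, (cos (φ₀ - α t) - cos φ₀)/α)` with
`φ₀ = arcsin (f' 0)`).  Then for every `t ∈ [0,T]` such that the second
coordinate of `μ` is nondecreasing on `[0,t]`, one has `f t ≥ x₂(μ t)`. -/
theorem circle_comparison (T α : ℝ) (hα : 0 < α) (f f' f'' : ℝ → ℝ)
    (hf : ∀ t ∈ Icc (0:ℝ) T, HasDerivAt f (f' t) t)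
    (hf' : ∀ t ∈ Icc (0:ℝ) T, HasDerivAt f' (f'' t) t)
    (hf''cont : ContinuousOn f'' (Icc (0:ℝ) T))
    (hf0 : f 0 = 0) (hf'0 : 0 ≤ f' 0) (hf'1 : f' 0 ≤ 1)
    (hcurv : ∀ t ∈ Icc (0:ℝ) T, |f' t| ≤ 1 →
      f'' t ≥ -α * Real.sqrt (1 - (f' t) ^ 2)) :
    ∀ t ∈ Icc (0:ℝ) T,
      (MonotoneOn
        (fun s => (Real.cos (Real.arcsin (f' 0) - α * s)
          - Real.cos (Real.arcsin (f' 0))) / α) (Icc (0:ℝ) t)) →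
      f t ≥ (Real.cos (Real.arcsin (f' 0) - α * t)
          - Real.cos (Real.arcsin (f' 0))) / α :=
  circle_comparison_general T α hα f f' f'' hf hf' hf0 hf'0 hf'1 hcurv
end

section
/- Let $u$ solve the graphical mean curvature flow equation $u_t = \left(\delta^{ij}-\frac{\partial_i u\,\partial_j u}{1+|\nabla u|^2}\right)\partial_i\partial_j u$ on a domain. Then $v=|\nabla u|^2$ satisfies $\partial_t v = \partial_i(a^{ij}\partial_j v) + a^{ijl}(\partial_l v)(\partial_i\partial_j u) - 2a^{ij}(\partial_r\partial_j u)(\partial_r\partial_i u)$, where $a^{ij}=a^{ij}(\nabla u)$ as above and $a^{ijl}=\partial_{p_l}a^{ij}-\partial_{p_j}a^{il}$. -/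
open Real

/-- The coefficients `a^{ij}(p) = δ^{ij} - pᵢpⱼ/(1+|p|²)` of the graphical mean
curvature flow equation. -/
noncomputable def aCoef (n : ℕ) (p : EuclideanSpace ℝ (Fin n)) (i j : Fin n) : ℝ :=
  (if i = j then (1:ℝ) else 0) - p i * p j / (1 + ‖p‖^2)

/-- Spatial partial derivative `∂ᵢ f`. -/
noncomputable def pd {n : ℕ} (i : Fin n) (f : EuclideanSpace ℝ (Fin n) → ℝ)
    (x : EuclideanSpace ℝ (Fin n)) : ℝ :=
  fderiv ℝ f x (EuclideanSpace.single i 1)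

/-- The spatial gradient `∇u(x,t)` as a vector of `ℝⁿ`. -/
noncomputable def gradu {n : ℕ} (u : EuclideanSpace ℝ (Fin n) → ℝ → ℝ)
    (x : EuclideanSpace ℝ (Fin n)) (t : ℝ) : EuclideanSpace ℝ (Fin n) :=
  (WithLp.equiv 2 (Fin n → ℝ)).symm (fun i => pd i (fun z => u z t) x)

/-- `∂_{p_l} a^{ij}` evaluated at `p`. -/
noncomputable def aD (n : ℕ) (i j l : Fin n) (p : EuclideanSpace ℝ (Fin n)) : ℝ :=
  fderiv ℝ (fun q => aCoef n q i j) p (EuclideanSpace.single l 1)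

/-! ### Auxiliary lemmas -/

lemma pd_sum' {n : ℕ} {ι : Type*} (s : Finset ι) (f : ι → EuclideanSpace ℝ (Fin n) → ℝ)
    (x : EuclideanSpace ℝ (Fin n)) (i : Fin n) (h : ∀ k ∈ s, DifferentiableAt ℝ (f k) x) :
    pd i (fun y => ∑ k ∈ s, f k y) x = ∑ k ∈ s, pd i (f k) x := by
  simp [pd, fderiv_fun_sum h]

lemma pd_mul' {n : ℕ} (f g : EuclideanSpace ℝ (Fin n) → ℝ) (x : EuclideanSpace ℝ (Fin n))
    (i : Fin n) (hf : DifferentiableAt ℝ f x) (hg : DifferentiableAt ℝ g x) :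
    pd i (fun y => f y * g y) x = pd i f x * g x + f x * pd i g x := by
  simp [pd, fderiv_fun_mul hf hg]; ring

lemma pd_const_mul' {n : ℕ} (c : ℝ) (f : EuclideanSpace ℝ (Fin n) → ℝ)
    (x : EuclideanSpace ℝ (Fin n)) (i : Fin n) (hf : DifferentiableAt ℝ f x) :
    pd i (fun y => c * f y) x = c * pd i f x := by
  simp [pd, fderiv_const_mul hf]

lemma pd_sq' {n : ℕ} (f : EuclideanSpace ℝ (Fin n) → ℝ) (x : EuclideanSpace ℝ (Fin n))
    (i : Fin n) (hf : DifferentiableAt ℝ f x) :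
    pd i (fun y => f y ^ 2) x = 2 * f x * pd i f x := by
  have h : (fun y => f y ^ 2) = fun y => f y * f y := by ext y; ring
  rw [h, pd_mul' f f x i hf hf]; ring

lemma pd_uncurry' {n : ℕ} (F : EuclideanSpace ℝ (Fin n) × ℝ → ℝ)
    (x : EuclideanSpace ℝ (Fin n)) (t : ℝ)
    (hF : DifferentiableAt ℝ F (x, t)) (i : Fin n) :
    pd i (fun z => F (z, t)) x = fderiv ℝ F (x, t) (EuclideanSpace.single i 1, 0) := by
  have h1 : HasFDerivAt (fun z : EuclideanSpace ℝ (Fin n) => (z, t))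
      (ContinuousLinearMap.inl ℝ _ ℝ) x := hasFDerivAt_prodMk_left x t
  have h2 : HasFDerivAt (fun z => F (z, t))
      ((fderiv ℝ F (x, t)).comp (ContinuousLinearMap.inl ℝ _ ℝ)) x :=
    hF.hasFDerivAt.comp x h1
  rw [pd, h2.fderiv]
  rfl

lemma deriv_uncurry' {n : ℕ} (F : EuclideanSpace ℝ (Fin n) × ℝ → ℝ)
    (x : EuclideanSpace ℝ (Fin n)) (t : ℝ)
    (hF : DifferentiableAt ℝ F (x, t)) :
    deriv (fun s => F (x, s)) t = fderiv ℝ F (x, t) (0, 1) := by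
  have h1 : HasFDerivAt (fun s : ℝ => (x, s))
      (ContinuousLinearMap.inr ℝ _ ℝ) t := hasFDerivAt_prodMk_right x t
  have h2 : HasFDerivAt (fun s => F (x, s))
      ((fderiv ℝ F (x, t)).comp (ContinuousLinearMap.inr ℝ _ ℝ)) t :=
    hF.hasFDerivAt.comp t h1
  rw [h2.hasDerivAt.deriv]
  rfl

lemma fderiv_swap' {X : Type*} [NormedAddCommGroup X] [NormedSpace ℝ X] (F : X → ℝ)
    (hF : ContDiff ℝ (⊤ : ℕ∞) F) (x : X) (v w : X) :
    fderiv ℝ (fun p => fderiv ℝ F p v) x w = fderiv ℝ (fun p => fderiv ℝ F p w) x v := by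
  have hd : ∀ y, HasFDerivAt F (fderiv ℝ F y) y :=
    fun y => ((hF.differentiable (by simp)) y).hasFDerivAt
  have hf' : ContDiff ℝ (⊤ : ℕ∞) (fderiv ℝ F) := hF.fderiv_right (by simp)
  have hd' : HasFDerivAt (fderiv ℝ F) (fderiv ℝ (fderiv ℝ F) x) x :=
    ((hf'.differentiable (by simp)) x).hasFDerivAt
  have hsymm := second_derivative_symmetric hd hd' v w
  have e1 : fderiv ℝ (fun p => fderiv ℝ F p v) x
      = (fderiv ℝ (fderiv ℝ F) x).flip v := by
    have := fderiv_clm_apply (c := fderiv ℝ F) (u := fun _ => v)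
      ((hf'.differentiable (by simp)) x) (differentiableAt_const v)
    simpa using this
  have e2 : fderiv ℝ (fun p => fderiv ℝ F p w) x
      = (fderiv ℝ (fderiv ℝ F) x).flip w := by
    have := fderiv_clm_apply (c := fderiv ℝ F) (u := fun _ => w)
      ((hf'.differentiable (by simp)) x) (differentiableAt_const w)
    simpa using this
  rw [e1, e2]
  simpa using hsymm.symm

lemma pd_swap' {n : ℕ} (g : EuclideanSpace ℝ (Fin n) → ℝ) (hg : ContDiff ℝ (⊤ : ℕ∞) g)
    (y : EuclideanSpace ℝ (Fin n)) (i j : Fin n) :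
    pd i (fun z => pd j g z) y = pd j (fun z => pd i g z) y := by
  simp only [pd]
  exact fderiv_swap' g hg y (EuclideanSpace.single j 1) (EuclideanSpace.single i 1)

lemma aCoef_contDiff (n : ℕ) (i j : Fin n) :
    ContDiff ℝ (⊤ : ℕ∞) (fun p : EuclideanSpace ℝ (Fin n) => aCoef n p i j) := by
  unfold aCoef
  apply ContDiff.sub contDiff_const
  exact ContDiff.div
    (((EuclideanSpace.proj (𝕜 := ℝ) i).contDiff).mul ((EuclideanSpace.proj (𝕜 := ℝ) j).contDiff))
    (contDiff_const.add (contDiff_norm_sq ℝ))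
    (fun p => by positivity)

lemma clm_apply_sum_single' {n : ℕ} (L : EuclideanSpace ℝ (Fin n) →L[ℝ] ℝ)
    (w : EuclideanSpace ℝ (Fin n)) :
    L w = ∑ l, L (EuclideanSpace.single l 1) * w l := by
  have hw : w = ∑ l, (w l) • EuclideanSpace.single l (1:ℝ) := by
    ext m
    rw [show (∑ l, (w l) • EuclideanSpace.single l (1:ℝ)) m
        = ∑ l, ((w l) • EuclideanSpace.single l (1:ℝ)) m by rw [WithLp.ofLp_sum, Finset.sum_apply]]
    simp [EuclideanSpace.single_apply]
  conv_lhs => rw [hw, map_sum]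
  refine Finset.sum_congr rfl fun l _ => ?_
  rw [map_smul]
  simp [mul_comm]

lemma fderiv_coord' {n : ℕ} (G : EuclideanSpace ℝ (Fin n) → EuclideanSpace ℝ (Fin n))
    (x : EuclideanSpace ℝ (Fin n)) (hG : DifferentiableAt ℝ G x)
    (v : EuclideanSpace ℝ (Fin n)) (l : Fin n) :
    fderiv ℝ G x v l = fderiv ℝ (fun y => G y l) x v := by
  have h : HasFDerivAt (fun y => G y l)
      ((EuclideanSpace.proj (𝕜 := ℝ) l).comp (fderiv ℝ G x)) x :=
    (EuclideanSpace.proj (𝕜 := ℝ) l).hasFDerivAt.comp x hG.hasFDerivAt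
  rw [h.fderiv]
  rfl

lemma fderiv_comp_coords' {n : ℕ} (g : EuclideanSpace ℝ (Fin n) → ℝ)
    (G : EuclideanSpace ℝ (Fin n) → EuclideanSpace ℝ (Fin n))
    (x : EuclideanSpace ℝ (Fin n))
    (hg : DifferentiableAt ℝ g (G x)) (hG : DifferentiableAt ℝ G x)
    (v : EuclideanSpace ℝ (Fin n)) :
    fderiv ℝ (fun y => g (G y)) x v
      = ∑ l, fderiv ℝ g (G x) (EuclideanSpace.single l 1) * fderiv ℝ G x v l := by
  have h := fderiv_comp x hg hG
  have h' : fderiv ℝ (fun y => g (G y)) x v = fderiv ℝ g (G x) (fderiv ℝ G x v) := by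
    rw [show (fun y => g (G y)) = g ∘ G from rfl, h]; rfl
  rw [h', clm_apply_sum_single']

lemma alg' {m : ℕ} (P : Fin m → ℝ) (Q : Fin m → Fin m → ℝ) (T : Fin m → Fin m → Fin m → ℝ)
    (A : Fin m → Fin m → ℝ) (B : Fin m → Fin m → Fin m → ℝ)
    (hQ : ∀ i j, Q i j = Q j i)
    (hT1 : ∀ a b c, T a b c = T b a c)
    (hT2 : ∀ a b c, T a b c = T a c b) :
    ∑ r, 2 * P r * (∑ i, ∑ j, ((∑ l, B i j l * Q r l) * Q i j + A i j * T r i j))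
    = (∑ i, ∑ j, ((∑ l, B i j l * Q i l) * (∑ r, 2 * P r * Q j r)
        + A i j * (∑ r, 2 * (Q i r * Q j r + P r * T i j r))))
      + (∑ i, ∑ j, ∑ l, (B i j l - B i l j) * (∑ r, 2 * P r * Q l r) * Q i j)
      - 2 * (∑ i, ∑ j, A i j * (∑ r, Q r j * Q r i)) := by
  simp only [Finset.mul_sum, Finset.sum_mul, mul_add, sub_mul, Finset.sum_add_distrib,
    Finset.sum_sub_distrib]
  have h1 : (∑ r : Fin m, ∑ i : Fin m, ∑ j : Fin m, 2 * P r * (A i j * T r i j))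
      = ∑ i : Fin m, ∑ j : Fin m, ∑ r : Fin m, A i j * (2 * (P r * T i j r)) := by
    rw [Finset.sum_comm]
    refine Finset.sum_congr rfl fun i _ => ?_
    rw [Finset.sum_comm]
    refine Finset.sum_congr rfl fun j _ => ?_
    refine Finset.sum_congr rfl fun r _ => ?_
    rw [hT1 r i j, hT2 i r j]
    ring
  have h2 : (∑ i : Fin m, ∑ j : Fin m, ∑ r : Fin m, A i j * (2 * (Q i r * Q j r)))
      = ∑ i : Fin m, ∑ j : Fin m, ∑ r : Fin m, 2 * (A i j * (Q r j * Q r i)) := by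
    refine Finset.sum_congr rfl fun i _ => Finset.sum_congr rfl fun j _ =>
      Finset.sum_congr rfl fun r _ => ?_
    rw [hQ r j, hQ r i]
    ring
  have h3 : (∑ r : Fin m, ∑ i : Fin m, ∑ j : Fin m, ∑ l : Fin m, 2 * P r * (B i j l * Q r l * Q i j))
      = ∑ i : Fin m, ∑ j : Fin m, ∑ l : Fin m, ∑ r : Fin m, B i j l * (2 * P r * Q l r) * Q i j := by
    rw [Finset.sum_comm]
    refine Finset.sum_congr rfl fun i _ => ?_
    rw [Finset.sum_comm]
    refine Finset.sum_congr rfl fun j _ => ?_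
    rw [Finset.sum_comm]
    refine Finset.sum_congr rfl fun l _ => ?_
    refine Finset.sum_congr rfl fun r _ => ?_
    rw [hQ r l]
    ring
  have h4 : (∑ i : Fin m, ∑ j : Fin m, ∑ r : Fin m, ∑ l : Fin m, B i j l * Q i l * (2 * P r * Q j r))
      = ∑ i : Fin m, ∑ j : Fin m, ∑ l : Fin m, ∑ r : Fin m, B i l j * (2 * P r * Q l r) * Q i j := by
    refine Finset.sum_congr rfl fun i _ => ?_
    conv_rhs => rw [Finset.sum_comm]
    refine Finset.sum_congr rfl fun a _ => ?_
    conv_lhs => rw [Finset.sum_comm]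
    refine Finset.sum_congr rfl fun b _ => Finset.sum_congr rfl fun r _ => ?_
    ring
  linarith [h1, h2, h3, h4]

/-- evolution equation for `v = |∇u|²` along the graphical mean
curvature flow `u_t = a^{ij}(∇u) ∂ᵢ∂ⱼu`:
`∂_t v = ∂ᵢ(a^{ij}∂ⱼv) + a^{ijl}(∂_l v)(∂ᵢ∂ⱼu) - 2 a^{ij}(∂_r∂_j u)(∂_r∂_i u)`
with `a^{ijl} = ∂_{p_l}a^{ij} - ∂_{p_j}a^{il}`. -/
theorem gradient_squared_evolution {n : ℕ} (u : EuclideanSpace ℝ (Fin n) → ℝ → ℝ)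
    (hu : ContDiff ℝ (⊤ : ℕ∞) (fun p : (EuclideanSpace ℝ (Fin n)) × ℝ => u p.1 p.2))
    (heq : ∀ x t, deriv (fun s => u x s) t =
      ∑ i, ∑ j, aCoef n (gradu u x t) i j *
        pd i (fun y => pd j (fun z => u z t) y) x) :
    ∀ x t,
      deriv (fun s => ∑ r, (pd r (fun z => u z s) x) ^ 2) t =
        (∑ i, pd i (fun y => ∑ j, aCoef n (gradu u y t) i j *
            pd j (fun z => ∑ r, (pd r (fun w => u w t) z) ^ 2) y) x)
        + (∑ i, ∑ j, ∑ l,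
            (aD n i j l (gradu u x t) - aD n i l j (gradu u x t)) *
              pd l (fun z => ∑ r, (pd r (fun w => u w t) z) ^ 2) x *
              pd i (fun y => pd j (fun z => u z t) y) x)
        - 2 * ∑ i, ∑ j, aCoef n (gradu u x t) i j *
            (∑ r, pd r (fun y => pd j (fun z => u z t) y) x *
              pd r (fun y => pd i (fun z => u z t) y) x) := by
  intro x t
  classical
  -- smoothness of the solution and its derivatives, at fixed time
  have hf : ∀ s : ℝ, ContDiff ℝ (⊤ : ℕ∞) (fun z => u z s) := fun s =>
    hu.comp (contDiff_id.prodMk contDiff_const)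
  have hf1 : ∀ (s : ℝ) (j : Fin n), ContDiff ℝ (⊤ : ℕ∞) (fun y => pd j (fun z => u z s) y) :=
    fun s j => ((hf s).fderiv_right (by simp)).clm_apply contDiff_const
  have hf2 : ∀ (s : ℝ) (i j : Fin n),
      ContDiff ℝ (⊤ : ℕ∞) (fun y => pd i (fun z => pd j (fun w => u w s) z) y) :=
    fun s i j => ((hf1 s j).fderiv_right (by simp)).clm_apply contDiff_const
  have hV : ContDiff ℝ (⊤ : ℕ∞) (fun z => ∑ r, (pd r (fun w => u w t) z) ^ 2) :=
    ContDiff.sum fun r _ => (hf1 t r).pow 2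
  have hV1 : ∀ j : Fin n,
      ContDiff ℝ (⊤ : ℕ∞) (fun y => pd j (fun z => ∑ r, (pd r (fun w => u w t) z) ^ 2) y) :=
    fun j => (hV.fderiv_right (by simp)).clm_apply contDiff_const
  have hG : ContDiff ℝ (⊤ : ℕ∞) (fun y => gradu u y t) := by
    have h1 : ContDiff ℝ (⊤ : ℕ∞) (fun y => (fun i => pd i (fun z => u z t) y)) :=
      contDiff_pi.2 fun i => hf1 t i
    exact ((PiLp.continuousLinearEquiv 2 ℝ (fun _ : Fin n => ℝ)).symm.contDiff).comp h1
  have ha : ∀ i j : Fin n, ContDiff ℝ (⊤ : ℕ∞) (fun y => aCoef n (gradu u y t) i j) := fun i j =>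
    (aCoef_contDiff n i j).comp hG
  -- first derivative of |∇u|²
  have hE1 : ∀ (y : EuclideanSpace ℝ (Fin n)) (k : Fin n),
      pd k (fun z => ∑ r, (pd r (fun w => u w t) z) ^ 2) y
      = ∑ r, 2 * pd r (fun w => u w t) y * pd k (fun z => pd r (fun w => u w t) z) y := by
    intro y k
    rw [pd_sum' Finset.univ (fun r z => (pd r (fun w => u w t) z) ^ 2) y k
      (fun r _ => ((hf1 t r).pow 2).differentiable (by simp) y)]
    exact Finset.sum_congr rfl fun r _ =>
      pd_sq' (fun z => pd r (fun w => u w t) z) y k ((hf1 t r).differentiable (by simp) y)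
  -- chain rule for the coefficients
  have hE2 : ∀ (y : EuclideanSpace ℝ (Fin n)) (k i j : Fin n),
      pd k (fun y' => aCoef n (gradu u y' t) i j) y
      = ∑ l, aD n i j l (gradu u y t) * pd k (fun z => pd l (fun w => u w t) z) y := by
    intro y k i j
    have hgdiff : DifferentiableAt ℝ (fun y' => gradu u y' t) y := (hG.differentiable (by simp)) y
    have hadiff : DifferentiableAt ℝ (fun p => aCoef n p i j) (gradu u y t) :=
      ((aCoef_contDiff n i j).differentiable (by simp)) _
    have h := fderiv_comp_coords' (fun p => aCoef n p i j) (fun y' => gradu u y' t) y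
      hadiff hgdiff (EuclideanSpace.single k 1)
    rw [show pd k (fun y' => aCoef n (gradu u y' t) i j) y
        = fderiv ℝ (fun y' => aCoef n (gradu u y' t) i j) y (EuclideanSpace.single k 1) from rfl, h]
    refine Finset.sum_congr rfl fun l _ => ?_
    simp only [aD]
    congr 1
    rw [fderiv_coord' _ _ hgdiff]
    have h2 : (fun z => gradu u z t l) = (fun z => pd l (fun w => u w t) z) :=
      funext fun z => rfl
    rw [h2]
    rfl
  -- symmetry of second derivatives
  have hQsym : ∀ i j : Fin n, pd i (fun y => pd j (fun z => u z t) y) x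
      = pd j (fun y => pd i (fun z => u z t) y) x := fun i j =>
    pd_swap' (fun z => u z t) (hf t) x i j
  have hTsym1 : ∀ a b c : Fin n,
      pd a (fun y => pd b (fun z => pd c (fun w => u w t) z) y) x
      = pd b (fun y => pd a (fun z => pd c (fun w => u w t) z) y) x := fun a b c =>
    pd_swap' (fun z => pd c (fun w => u w t) z) (hf1 t c) x a b
  have hTsym2 : ∀ a b c : Fin n,
      pd a (fun y => pd b (fun z => pd c (fun w => u w t) z) y) x
      = pd a (fun y => pd c (fun z => pd b (fun w => u w t) z) y) x := by
    intro a b c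
    have h : (fun y => pd b (fun z => pd c (fun w => u w t) z) y)
        = (fun y => pd c (fun z => pd b (fun w => u w t) z) y) :=
      funext fun y => pd_swap' (fun w => u w t) (hf t) y b c
    rw [h]
  -- the time derivative, using symmetry of mixed partials
  have hDT : deriv (fun s => ∑ r, (pd r (fun z => u z s) x) ^ 2) t
      = ∑ r, 2 * pd r (fun z => u z t) x *
          pd r (fun z => deriv (fun s => u z s) t) x := by
    have hD : ∀ r : Fin n, ContDiff ℝ (⊤ : ℕ∞) (fun p : EuclideanSpace ℝ (Fin n) × ℝ =>
        fderiv ℝ (fun q : EuclideanSpace ℝ (Fin n) × ℝ => u q.1 q.2) p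
          (EuclideanSpace.single r 1, 0)) :=
      fun r => (hu.fderiv_right (by simp)).clm_apply contDiff_const
    have hDt : ContDiff ℝ (⊤ : ℕ∞) (fun p : EuclideanSpace ℝ (Fin n) × ℝ =>
        fderiv ℝ (fun q : EuclideanSpace ℝ (Fin n) × ℝ => u q.1 q.2) p ((0 : EuclideanSpace ℝ (Fin n)), (1:ℝ))) :=
      (hu.fderiv_right (by simp)).clm_apply contDiff_const
    have hpd : ∀ (z : EuclideanSpace ℝ (Fin n)) (s : ℝ) (r : Fin n),
        pd r (fun w => u w s) z
        = fderiv ℝ (fun q : EuclideanSpace ℝ (Fin n) × ℝ => u q.1 q.2) (z, s)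
            (EuclideanSpace.single r 1, 0) := fun z s r =>
      pd_uncurry' (fun q => u q.1 q.2) z s ((hu.differentiable (by simp)) _) r
    have hfun : (fun s => ∑ r, (pd r (fun z => u z s) x) ^ 2)
        = fun s => ∑ r, (fderiv ℝ (fun q : EuclideanSpace ℝ (Fin n) × ℝ => u q.1 q.2) (x, s)
            (EuclideanSpace.single r 1, 0)) ^ 2 := by
      funext s; exact Finset.sum_congr rfl fun r _ => by rw [hpd]
    rw [hfun]
    have hcomp : ∀ r : Fin n, HasDerivAt (fun s =>
        fderiv ℝ (fun q : EuclideanSpace ℝ (Fin n) × ℝ => u q.1 q.2) (x, s)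
          (EuclideanSpace.single r 1, 0))
        (fderiv ℝ (fun p : EuclideanSpace ℝ (Fin n) × ℝ =>
          fderiv ℝ (fun q : EuclideanSpace ℝ (Fin n) × ℝ => u q.1 q.2) p
            (EuclideanSpace.single r 1, 0)) (x, t) ((0 : EuclideanSpace ℝ (Fin n)), (1:ℝ))) t := by
      intro r
      have h1 : HasFDerivAt (fun s : ℝ => (x, s))
          (ContinuousLinearMap.inr ℝ (EuclideanSpace ℝ (Fin n)) ℝ) t :=
        hasFDerivAt_prodMk_right x t
      have h2 : HasFDerivAt (fun s : ℝ =>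
          fderiv ℝ (fun q : EuclideanSpace ℝ (Fin n) × ℝ => u q.1 q.2) (x, s)
            (EuclideanSpace.single r 1, 0))
          ((fderiv ℝ (fun p : EuclideanSpace ℝ (Fin n) × ℝ =>
            fderiv ℝ (fun q : EuclideanSpace ℝ (Fin n) × ℝ => u q.1 q.2) p
              (EuclideanSpace.single r 1, 0)) (x, t)).comp
            (ContinuousLinearMap.inr ℝ (EuclideanSpace ℝ (Fin n)) ℝ)) t :=
        (((hD r).differentiable (by simp)) _).hasFDerivAt.comp t h1
      have h3 := h2.hasDerivAt
      simpa using h3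
    have hsum := HasDerivAt.fun_sum (fun r (_ : r ∈ (Finset.univ : Finset (Fin n))) =>
      ((hcomp r).pow 2))
    refine hsum.deriv.trans ?_
    refine Finset.sum_congr rfl fun r _ => ?_
    rw [fderiv_swap' (fun q : EuclideanSpace ℝ (Fin n) × ℝ => u q.1 q.2) hu (x, t)
      (EuclideanSpace.single r 1, 0) ((0 : EuclideanSpace ℝ (Fin n)), (1:ℝ))]
    have h4 : fderiv ℝ (fun p : EuclideanSpace ℝ (Fin n) × ℝ =>
        fderiv ℝ (fun q : EuclideanSpace ℝ (Fin n) × ℝ => u q.1 q.2) p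
          ((0 : EuclideanSpace ℝ (Fin n)), (1:ℝ))) (x, t) (EuclideanSpace.single r 1, 0)
        = pd r (fun z => fderiv ℝ (fun q : EuclideanSpace ℝ (Fin n) × ℝ => u q.1 q.2) (z, t)
            ((0 : EuclideanSpace ℝ (Fin n)), (1:ℝ))) x :=
      (pd_uncurry' _ x t ((hDt.differentiable (by simp)) _) r).symm
    rw [h4]
    have h5 : (fun z => fderiv ℝ (fun q : EuclideanSpace ℝ (Fin n) × ℝ => u q.1 q.2) (z, t)
        ((0 : EuclideanSpace ℝ (Fin n)), (1:ℝ))) = fun z => deriv (fun s => u z s) t :=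
      funext fun z => (deriv_uncurry' (fun q => u q.1 q.2) z t
        ((hu.differentiable (by simp)) _)).symm
    rw [h5, ← hpd x t r]
    push_cast
    ring
  rw [hDT]
  -- substitute the PDE
  have hheq : (fun z => deriv (fun s => u z s) t)
      = fun z => ∑ i, ∑ j, aCoef n (gradu u z t) i j *
          pd i (fun y => pd j (fun w => u w t) y) z := funext fun z => heq z t
  rw [hheq]
  -- expand the spatial derivative of the PDE right-hand side
  have hbig : ∀ r : Fin n,
      pd r (fun z => ∑ i, ∑ j, aCoef n (gradu u z t) i j *
        pd i (fun y => pd j (fun w => u w t) y) z) x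
      = ∑ i, ∑ j, ((∑ l, aD n i j l (gradu u x t) *
            pd r (fun z => pd l (fun w => u w t) z) x) *
          pd i (fun y => pd j (fun w => u w t) y) x
        + aCoef n (gradu u x t) i j *
          pd r (fun z => pd i (fun y => pd j (fun w => u w t) y) z) x) := by
    intro r
    rw [pd_sum' Finset.univ (fun i z => ∑ j, aCoef n (gradu u z t) i j *
        pd i (fun y => pd j (fun w => u w t) y) z) x r
      (fun i _ => (ContDiff.sum fun j _ => (ha i j).mul (hf2 t i j)).differentiable (by simp) x)]
    refine Finset.sum_congr rfl fun i _ => ?_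
    rw [pd_sum' Finset.univ (fun j z => aCoef n (gradu u z t) i j *
        pd i (fun y => pd j (fun w => u w t) y) z) x r
      (fun j _ => ((ha i j).mul (hf2 t i j)).differentiable (by simp) x)]
    refine Finset.sum_congr rfl fun j _ => ?_
    rw [pd_mul' (fun z => aCoef n (gradu u z t) i j)
      (fun z => pd i (fun y => pd j (fun w => u w t) y) z) x r
      ((ha i j).differentiable (by simp) x) ((hf2 t i j).differentiable (by simp) x)]
    rw [hE2 x r i j]
  -- expand the divergence term on the right-hand side
  have hdiv : ∀ i : Fin n,
      pd i (fun y => ∑ j, aCoef n (gradu u y t) i j *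
        pd j (fun z => ∑ r, (pd r (fun w => u w t) z) ^ 2) y) x
      = ∑ j, ((∑ l, aD n i j l (gradu u x t) *
            pd i (fun z => pd l (fun w => u w t) z) x) *
          (∑ r, 2 * pd r (fun w => u w t) x *
            pd j (fun z => pd r (fun w => u w t) z) x)
        + aCoef n (gradu u x t) i j *
          (∑ r, 2 * (pd i (fun z => pd r (fun w => u w t) z) x *
              pd j (fun z => pd r (fun w => u w t) z) x
            + pd r (fun w => u w t) x *
              pd i (fun y => pd j (fun z => pd r (fun w => u w t) z) y) x))) := by
    intro i
    rw [pd_sum' Finset.univ (fun j y => aCoef n (gradu u y t) i j *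
        pd j (fun z => ∑ r, (pd r (fun w => u w t) z) ^ 2) y) x i
      (fun j _ => ((ha i j).mul (hV1 j)).differentiable (by simp) x)]
    refine Finset.sum_congr rfl fun j _ => ?_
    rw [pd_mul' (fun y => aCoef n (gradu u y t) i j)
      (fun y => pd j (fun z => ∑ r, (pd r (fun w => u w t) z) ^ 2) y) x i
      ((ha i j).differentiable (by simp) x) ((hV1 j).differentiable (by simp) x)]
    rw [hE2 x i i j, hE1 x j]
    congr 1
    -- second factor: ∂ᵢ(∂ⱼ v)
    have h6 : (fun y => pd j (fun z => ∑ r, (pd r (fun w => u w t) z) ^ 2) y)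
        = fun y => ∑ r, 2 * pd r (fun w => u w t) y *
            pd j (fun z => pd r (fun w => u w t) z) y := funext fun y => hE1 y j
    rw [h6]
    rw [pd_sum' Finset.univ (fun r y => 2 * pd r (fun w => u w t) y *
        pd j (fun z => pd r (fun w => u w t) z) y) x i
      (fun r _ => ((contDiff_const.mul (hf1 t r)).mul (hf2 t j r)).differentiable (by simp) x)]
    congr 1
    refine Finset.sum_congr rfl fun r _ => ?_
    rw [pd_mul' (fun y => 2 * pd r (fun w => u w t) y)
      (fun y => pd j (fun z => pd r (fun w => u w t) z) y) x i
      ((contDiff_const.mul (hf1 t r)).differentiable (by simp) x)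
      ((hf2 t j r).differentiable (by simp) x)]
    rw [pd_const_mul' 2 (fun y => pd r (fun w => u w t) y) x i
      ((hf1 t r).differentiable (by simp) x)]
    ring
  -- rewrite everything and conclude by the algebraic identity
  have hlv : ∀ l : Fin n, pd l (fun z => ∑ r, (pd r (fun w => u w t) z) ^ 2) x
      = ∑ r, 2 * pd r (fun w => u w t) x * pd l (fun z => pd r (fun w => u w t) z) x :=
    fun l => hE1 x l
  calc
    ∑ r, 2 * pd r (fun z => u z t) x *
        pd r (fun z => ∑ i, ∑ j, aCoef n (gradu u z t) i j *
          pd i (fun y => pd j (fun w => u w t) y) z) x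
      = ∑ r, 2 * pd r (fun w => u w t) x *
          (∑ i, ∑ j, ((∑ l, aD n i j l (gradu u x t) *
              pd r (fun z => pd l (fun w => u w t) z) x) *
            pd i (fun y => pd j (fun w => u w t) y) x
          + aCoef n (gradu u x t) i j *
            pd r (fun z => pd i (fun y => pd j (fun w => u w t) y) z) x)) := by
        exact Finset.sum_congr rfl fun r _ => by rw [hbig r]
    _ = (∑ i, pd i (fun y => ∑ j, aCoef n (gradu u y t) i j *
            pd j (fun z => ∑ r, (pd r (fun w => u w t) z) ^ 2) y) x)
        + (∑ i, ∑ j, ∑ l,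
            (aD n i j l (gradu u x t) - aD n i l j (gradu u x t)) *
              pd l (fun z => ∑ r, (pd r (fun w => u w t) z) ^ 2) x *
              pd i (fun y => pd j (fun z => u z t) y) x)
        - 2 * ∑ i, ∑ j, aCoef n (gradu u x t) i j *
            (∑ r, pd r (fun y => pd j (fun z => u z t) y) x *
              pd r (fun y => pd i (fun z => u z t) y) x) := by
        have key := alg' (fun r => pd r (fun w => u w t) x)
          (fun i j => pd i (fun y => pd j (fun w => u w t) y) x)
          (fun a b c => pd a (fun y => pd b (fun z => pd c (fun w => u w t) z) y) x)
          (fun i j => aCoef n (gradu u x t) i j)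
          (fun i j l => aD n i j l (gradu u x t))
          hQsym hTsym1 hTsym2
        rw [key]
        congr 1
        · congr 1
          · exact Finset.sum_congr rfl fun i _ => (hdiv i).symm
          · refine Finset.sum_congr rfl fun i _ => Finset.sum_congr rfl fun j _ =>
              Finset.sum_congr rfl fun l _ => ?_
            rw [hlv l]
end

section
/- Let $M^1_t$ and $M^2_t$ be smooth mean curvature flows with $M^2_t$ contained in a tubular neighborhood of $M^1_t$, written as a normal graph $M^2_t=\{x+u(x,t)N(x,t): x\in M^1_t\}$ with inner unit normal $N$. Then at points where $\nabla u = 0$ and with $|A|\,|u|\le \epsilon$ for the second fundamental form $A$ of $M^1_t$, the evolution satisfies $|u_t - \Delta_{M^1} u - |A|^2 u| \le C(|A||u|)\,|\nabla^2 u| + C(|A||u|)^2|A|$ for a dimensional constant $C$. -/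
/-!
At a critical point the equation gives
`u_t - Δu - |A|²u = ε · Σ (δᵢⱼ + Lᵢⱼ) Hᵢⱼ + Σ Lᵢⱼ Hᵢⱼ - Σ Qᵢⱼ Aᵢⱼ`,
a sum of entrywise products each carrying a factor of size `O(|A||u|)` against `H` or `A`;
since `|A||u| ≤ 1`, the higher powers of `|A||u|` are absorbed into the constant.
-/

open Finset

lemma abs_sum_mul_le_mul_sum_abs {ι : Type*} {s : Finset ι} {f g : ι → ℝ} {b : ℝ}
    (h : ∀ i ∈ s, |f i| ≤ b) : |∑ i ∈ s, f i * g i| ≤ b * ∑ i ∈ s, |g i| :=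
  calc |∑ i ∈ s, f i * g i| ≤ ∑ i ∈ s, |f i| * |g i| := by
        simpa only [abs_mul] using abs_sum_le_sum_abs (fun i => f i * g i) s
    _ ≤ ∑ i ∈ s, b * |g i| :=
        sum_le_sum fun i hi => mul_le_mul_of_nonneg_right (h i hi) (abs_nonneg _)
    _ = b * ∑ i ∈ s, |g i| := (mul_sum _ _ _).symm

lemma abs_sum_sum_mul_le_mul_sum_sum_abs {ι κ : Type*} [Fintype ι] [Fintype κ]
    {X Y : ι → κ → ℝ} {b : ℝ} (h : ∀ i j, |X i j| ≤ b) :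
    |∑ i, ∑ j, X i j * Y i j| ≤ b * ∑ i, ∑ j, |Y i j| :=
  calc |∑ i, ∑ j, X i j * Y i j| ≤ ∑ i, |∑ j, X i j * Y i j| := abs_sum_le_sum_abs _ _
    _ ≤ ∑ i, b * ∑ j, |Y i j| :=
        sum_le_sum fun i _ => abs_sum_mul_le_mul_sum_abs fun j _ => h i j
    _ = b * ∑ i, ∑ j, |Y i j| := (mul_sum _ _ _).symm

lemma sum_sum_one_add_mul {ι : Type*} [Fintype ι] [DecidableEq ι] (L H : ι → ι → ℝ) :
    ∑ i, ∑ j, ((if i = j then (1:ℝ) else 0) + L i j) * H i j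
      = ∑ i, H i i + ∑ i, ∑ j, L i j * H i j := by
  simp only [add_mul, ite_mul, one_mul, zero_mul, sum_add_distrib, sum_ite_eq, mem_univ,
    if_true]

lemma abs_sub_laplacian_sub_le {n : ℕ} {ut lap a uval ε δ : ℝ} {L Q A H : Fin n → Fin n → ℝ}
    (hε : |ε| ≤ δ) (hL : ∀ i j, |L i j| ≤ δ) (hQ : ∀ i j, |Q i j| ≤ δ ^ 2)
    (hA : ∀ i j, |A i j| ≤ a) (hlap : lap = ∑ i, H i i)
    (hut : ut = (1 + ε) * (∑ i, ∑ j, ((if i = j then (1:ℝ) else 0) + L i j) * H i j)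
        + a ^ 2 * uval - ∑ i, ∑ j, Q i j * A i j) :
    |ut - lap - a ^ 2 * uval| ≤
      δ * (2 + δ) * (∑ i, ∑ j, |H i j|) + (n : ℝ) ^ 2 * δ ^ 2 * a := by
  set S := ∑ i, ∑ j, |H i j|
  set P := ∑ i, ∑ j, ((if i = j then (1:ℝ) else 0) + L i j) * H i j
  set T := ∑ i, ∑ j, L i j * H i j
  set R := ∑ i, ∑ j, Q i j * A i j
  have hδ : 0 ≤ δ := (abs_nonneg ε).trans hε
  have hS : 0 ≤ S := sum_nonneg fun i _ => sum_nonneg fun j _ => abs_nonneg _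
  have hP : |P| ≤ (1 + δ) * S := abs_sum_sum_mul_le_mul_sum_sum_abs fun i j =>
    (abs_add_le _ _).trans (add_le_add (by split_ifs <;> simp) (hL i j))
  have hT : |T| ≤ δ * S := abs_sum_sum_mul_le_mul_sum_sum_abs hL
  have hR : |R| ≤ (n : ℝ) ^ 2 * δ ^ 2 * a :=
    calc |R| ≤ δ ^ 2 * ∑ i, ∑ j, |A i j| := abs_sum_sum_mul_le_mul_sum_sum_abs hQ
      _ ≤ δ ^ 2 * ∑ _i : Fin n, ∑ _j : Fin n, a := by gcongr with i _ j _; exact hA i j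
      _ = (n : ℝ) ^ 2 * δ ^ 2 * a := by
          simp only [sum_const, card_univ, Fintype.card_fin, nsmul_eq_mul]
          ring
  have hkey : ut - lap - a ^ 2 * uval = ε * P + T - R := by
    have hPT : P = lap + T := hlap ▸ sum_sum_one_add_mul L H
    rw [hut, hPT]; ring
  calc |ut - lap - a ^ 2 * uval| ≤ |ε| * |P| + |T| + |R| := by
        rw [hkey, ← abs_mul]; exact (abs_sub _ _).trans (by gcongr; exact abs_add_le _ _)
    _ ≤ δ * ((1 + δ) * S) + δ * S + (n : ℝ) ^ 2 * δ ^ 2 * a := by gcongr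
    _ = δ * (2 + δ) * S + (n : ℝ) ^ 2 * δ ^ 2 * a := by ring

/-- pointwise consequence of Lemma 4.5: if `u` satisfies the
structural normal-graph equation
`u_t = (1+ε) Σ (δ_{ij}+L_{ij}) ∂ᵢ∂ⱼu + |A|² u - Σ Q_{ij} A_{ij}`
at a point where `∇u = 0`, with `|ε|, |L_{ij}| ≤ D|A||u|`,
`|Q_{ij}| ≤ (D|A||u|)²`, `|A_{ij}| ≤ |A|`, and `|A||u| ≤ 1`, then
`|u_t - Δu - |A|²u| ≤ C (|A||u|) |∇²u| + C (|A||u|)² |A|` for a constant `C`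
depending only on the dimension `n` and `D`.  Here `ut, lap, a, uval` denote the
values of `u_t`, `Δu`, `|A|`, `u` at the point, and `H` the Hessian `∇²u`. -/
theorem graph_pde_pointwise (n : ℕ) (D : ℝ) (hD : 0 < D) :
    ∃ C > 0, ∀ (ut lap a uval ε : ℝ) (L Q A H : Fin n → Fin n → ℝ),
      0 ≤ a →
      |ε| ≤ D * (a * |uval|) →
      (∀ i j, |L i j| ≤ D * (a * |uval|)) →
      (∀ i j, |Q i j| ≤ (D * (a * |uval|)) ^ 2) →
      (∀ i j, |A i j| ≤ a) →
      lap = ∑ i, H i i →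
      a * |uval| ≤ 1 →
      ut = (1 + ε) * (∑ i, ∑ j, ((if i = j then (1:ℝ) else 0) + L i j) * H i j)
        + a ^ 2 * uval - ∑ i, ∑ j, Q i j * A i j →
      |ut - lap - a ^ 2 * uval| ≤
        C * (a * |uval|) * (∑ i, ∑ j, |H i j|) + C * (a * |uval|) ^ 2 * a := by
  refine ⟨D * (2 + D) + n ^ 2 * D ^ 2, by positivity, ?_⟩
  intro ut lap a uval ε L Q A H ha hε hL hQ hA hlap hsmall hut
  set m := a * |uval|
  have hDm : D * m ≤ D := mul_le_of_le_one_right hD.le hsmall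
  calc |ut - lap - a ^ 2 * uval|
      ≤ D * m * (2 + D * m) * (∑ i, ∑ j, |H i j|) + (n : ℝ) ^ 2 * (D * m) ^ 2 * a :=
        abs_sub_laplacian_sub_le hε hL hQ hA hlap hut
    _ ≤ D * (2 + D) * m * (∑ i, ∑ j, |H i j|) + (n : ℝ) ^ 2 * D ^ 2 * m ^ 2 * a := by
        rw [show D * m * (2 + D * m) = D * (2 + D * m) * m by ring,
          show (n : ℝ) ^ 2 * (D * m) ^ 2 = (n : ℝ) ^ 2 * D ^ 2 * m ^ 2 by ring]
        gcongr
    _ ≤ _ := by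
        gcongr
        · exact le_add_of_nonneg_right (by positivity)
        · exact le_add_of_nonneg_left (by positivity)
end
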